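/- For every natural number γ and all syntax trees t_1 and t_2 on G_γ with the same number of leaves, word_γ(t_1) = word_γ(t_2) if and only if t_1 and t_2 are related by the smallest equivalence relation on syntax trees that is closed under replacing, anywhere inside a tree (keeping the pending subtrees in the same left-to-right order), one side of a listed relation by the other, where the listed relations between two-internal-node patterns are: ⊣_a ∘_1 ⊢_{a'} ∼ ⊢_{a'} ∘_2 ⊣_a for a, a' ∈ {1,…,γ}; ⊣_a ∘_1 ⊣_b ∼ ⊣_a ∘_2 ⊢_b, ⊢_a ∘_1 ⊣_b ∼ ⊢_a ∘_2 ⊢_b, ⊣_b ∘_1 ⊣_a ∼ ⊣_a ∘_2 ⊣_b, ⊢_a ∘_1 ⊢_b ∼ ⊢_b ∘_2 ⊢_a for a < b in {1,…,γ}; ⊣_d ∘_1 ⊣_d ∼ ⊣_d ∘_2 ⊣_c ∼ ⊣_d ∘_2 ⊢_c and ⊢_d ∘_1 ⊣_c ∼ ⊢_d ∘_1 ⊢_c ∼ ⊢_d ∘_2 ⊢_d for c ≤ d in {1,…,γ}. (This is the combinatorial content of the presentation by generators and relations of the operad Dias_γ.) -/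

import Mathlib

/-- Syntax trees on `G_γ = {⊣_a, ⊢_a : a ∈ {1, …, γ}}`: complete planar binary
trees whose internal nodes carry a label `⊣_a` (`dashv a`) or `⊢_a` (`vdash a`),
the index `a : Fin γ` encoding the letter `a + 1 ∈ {1, …, γ}`. -/
inductive STree (γ : ℕ) : Type
  | leaf : STree γ
  | dashv (a : Fin γ) (l r : STree γ) : STree γ
  | vdash (a : Fin γ) (l r : STree γ) : STree γ

/-- `hA a` replaces every letter smaller than `a` by `a`. -/
def hA (a : ℕ) (w : List ℕ) : List ℕ := w.map (fun b => max a b)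

/-- The word associated with a syntax tree. -/
def wordOf {γ : ℕ} : STree γ → List ℕ
  | .leaf => [0]
  | .dashv a l r => wordOf l ++ hA (a.val + 1) (wordOf r)
  | .vdash a l r => hA (a.val + 1) (wordOf l) ++ wordOf r

/-- Number of leaves (the arity) of a syntax tree. -/
def nleaves {γ : ℕ} : STree γ → ℕ
  | .leaf => 1
  | .dashv _ l r => nleaves l + nleaves r
  | .vdash _ l r => nleaves l + nleaves r

/-- The right comb with internal nodes labeled, from top to bottom, by
`⊢_{u_1}, …, ⊢_{u_{|u|}}`, each left child being a leaf. -/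
def rightComb {γ : ℕ} : List (Fin γ) → STree γ
  | [] => .leaf
  | a :: u => .vdash a .leaf (rightComb u)

/-- The hook syntax tree associated with the word `u0v`: a left comb labeled
from bottom to top by `⊣_{v_1}, …, ⊣_{v_{|v|}}` (right children being leaves)
grafted on top of the right comb associated to `u`. -/
def hook {γ : ℕ} (u v : List (Fin γ)) : STree γ :=
  v.foldl (fun t b => .dashv b t .leaf) (rightComb u)

/-- The listed relations between two-internal-node patterns (the space of
relations of the presentation of `Dias_γ`). -/
inductive RootRel (γ : ℕ) : STree γ → STree γ → Prop
  | e1 (a a' : Fin γ) (x y z : STree γ) :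
      RootRel γ (.dashv a (.vdash a' x y) z) (.vdash a' x (.dashv a y z))
  | e2 (a b : Fin γ) (h : a < b) (x y z : STree γ) :
      RootRel γ (.dashv a (.dashv b x y) z) (.dashv a x (.vdash b y z))
  | e3 (a b : Fin γ) (h : a < b) (x y z : STree γ) :
      RootRel γ (.vdash a (.dashv b x y) z) (.vdash a x (.vdash b y z))
  | e4 (a b : Fin γ) (h : a < b) (x y z : STree γ) :
      RootRel γ (.dashv b (.dashv a x y) z) (.dashv a x (.dashv b y z))
  | e5 (a b : Fin γ) (h : a < b) (x y z : STree γ) :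
      RootRel γ (.vdash a (.vdash b x y) z) (.vdash b x (.vdash a y z))
  | e6a (c d : Fin γ) (h : c ≤ d) (x y z : STree γ) :
      RootRel γ (.dashv d (.dashv d x y) z) (.dashv d x (.dashv c y z))
  | e6b (c d : Fin γ) (h : c ≤ d) (x y z : STree γ) :
      RootRel γ (.dashv d x (.dashv c y z)) (.dashv d x (.vdash c y z))
  | e7a (c d : Fin γ) (h : c ≤ d) (x y z : STree γ) :
      RootRel γ (.vdash d (.dashv c x y) z) (.vdash d (.vdash c x y) z)
  | e7b (c d : Fin γ) (h : c ≤ d) (x y z : STree γ) :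
      RootRel γ (.vdash d (.vdash c x y) z) (.vdash d x (.vdash d y z))

/-- Replacement of one side of a listed relation by the other, anywhere
inside a tree. -/
inductive Cong (γ : ℕ) : STree γ → STree γ → Prop
  | here {s t : STree γ} : RootRel γ s t → Cong γ s t
  | dashvL (a : Fin γ) {s s' : STree γ} (r : STree γ) :
      Cong γ s s' → Cong γ (.dashv a s r) (.dashv a s' r)
  | dashvR (a : Fin γ) (l : STree γ) {s s' : STree γ} :
      Cong γ s s' → Cong γ (.dashv a l s) (.dashv a l s')
  | vdashL (a : Fin γ) {s s' : STree γ} (r : STree γ) :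
      Cong γ s s' → Cong γ (.vdash a s r) (.vdash a s' r)
  | vdashR (a : Fin γ) (l : STree γ) {s s' : STree γ} :
      Cong γ s s' → Cong γ (.vdash a l s) (.vdash a l s')

abbrev Eqv (γ : ℕ) : STree γ → STree γ → Prop := Relation.EqvGen (Cong γ)

lemma eqvRefl {γ : ℕ} (t : STree γ) : Eqv γ t t := Relation.EqvGen.refl t
lemma eqvSymm {γ : ℕ} {s t : STree γ} (h : Eqv γ s t) : Eqv γ t s := Relation.EqvGen.symm _ _ h
lemma eqvTrans {γ : ℕ} {s t u : STree γ} (h1 : Eqv γ s t) (h2 : Eqv γ t u) : Eqv γ s u :=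
  Relation.EqvGen.trans _ _ _ h1 h2
lemma eqvRel {γ : ℕ} {s t : STree γ} (h : RootRel γ s t) : Eqv γ s t :=
  Relation.EqvGen.rel _ _ (Cong.here h)

lemma eqvDashvL {γ : ℕ} (a : Fin γ) {s s' : STree γ} (r : STree γ) (h : Eqv γ s s') :
    Eqv γ (.dashv a s r) (.dashv a s' r) := by
  induction h with
  | rel x y h => exact .rel _ _ (.dashvL a r h)
  | refl x => exact .refl _
  | symm x y _ ih => exact .symm _ _ ih
  | trans x y z _ _ ih1 ih2 => exact .trans _ _ _ ih1 ih2

lemma eqvDashvR {γ : ℕ} (a : Fin γ) (l : STree γ) {s s' : STree γ} (h : Eqv γ s s') :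
    Eqv γ (.dashv a l s) (.dashv a l s') := by
  induction h with
  | rel x y h => exact .rel _ _ (.dashvR a l h)
  | refl x => exact .refl _
  | symm x y _ ih => exact .symm _ _ ih
  | trans x y z _ _ ih1 ih2 => exact .trans _ _ _ ih1 ih2

lemma eqvVdashL {γ : ℕ} (a : Fin γ) {s s' : STree γ} (r : STree γ) (h : Eqv γ s s') :
    Eqv γ (.vdash a s r) (.vdash a s' r) := by
  induction h with
  | rel x y h => exact .rel _ _ (.vdashL a r h)
  | refl x => exact .refl _
  | symm x y _ ih => exact .symm _ _ ih
  | trans x y z _ _ ih1 ih2 => exact .trans _ _ _ ih1 ih2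

lemma eqvVdashR {γ : ℕ} (a : Fin γ) (l : STree γ) {s s' : STree γ} (h : Eqv γ s s') :
    Eqv γ (.vdash a l s) (.vdash a l s') := by
  induction h with
  | rel x y h => exact .rel _ _ (.vdashR a l h)
  | refl x => exact .refl _
  | symm x y _ ih => exact .symm _ _ ih
  | trans x y z _ _ ih1 ih2 => exact .trans _ _ _ ih1 ih2

lemma eqvDashv {γ : ℕ} (a : Fin γ) {l l' r r' : STree γ} (h1 : Eqv γ l l') (h2 : Eqv γ r r') :
    Eqv γ (.dashv a l r) (.dashv a l' r') :=
  eqvTrans (eqvDashvL a r h1) (eqvDashvR a l' h2)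

lemma eqvVdash {γ : ℕ} (a : Fin γ) {l l' r r' : STree γ} (h1 : Eqv γ l l') (h2 : Eqv γ r r') :
    Eqv γ (.vdash a l r) (.vdash a l' r') :=
  eqvTrans (eqvVdashL a r h1) (eqvVdashR a l' h2)

lemma hook_nil {γ : ℕ} (u : List (Fin γ)) : hook u [] = rightComb u := rfl

lemma hook_concat {γ : ℕ} (u v : List (Fin γ)) (b : Fin γ) :
    hook u (v ++ [b]) = .dashv b (hook u v) .leaf := by
  simp [hook, List.foldl_append]

lemma hA_append (a : ℕ) (x y : List ℕ) : hA a (x ++ y) = hA a x ++ hA a y :=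
  List.map_append

lemma hA_hA (a b : ℕ) (w : List ℕ) : hA a (hA b w) = hA (max a b) w := by
  simp only [hA, List.map_map]
  congr 1
  funext c
  simp [Function.comp, max_assoc]

lemma finValMax {n : ℕ} (a b : Fin n) : (max a b).val = max a.val b.val := by
  rcases le_total a b with h | h
  · simp [max_eq_right h, Nat.max_eq_right (Fin.le_iff_val_le_val.mp h)]
  · simp [max_eq_left h, Nat.max_eq_left (Fin.le_iff_val_le_val.mp h)]

lemma word_rootRel {γ : ℕ} {s t : STree γ} (h : RootRel γ s t) : wordOf s = wordOf t := by
  cases h with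
  | e1 a a' x y z => simp [wordOf, hA_append, hA_hA, List.append_assoc]
  | e2 a b h x y z =>
      have hb : max (a.val + 1) (b.val + 1) = b.val + 1 :=
        Nat.max_eq_right (by have := Fin.lt_iff_val_lt_val.mp h; omega)
      simp [wordOf, hA_append, hA_hA, List.append_assoc, hb]
  | e3 a b h x y z =>
      have hb : max (a.val + 1) (b.val + 1) = b.val + 1 :=
        Nat.max_eq_right (by have := Fin.lt_iff_val_lt_val.mp h; omega)
      simp [wordOf, hA_append, hA_hA, List.append_assoc, hb]
  | e4 a b h x y z =>
      have hb : max (a.val + 1) (b.val + 1) = b.val + 1 :=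
        Nat.max_eq_right (by have := Fin.lt_iff_val_lt_val.mp h; omega)
      simp [wordOf, hA_append, hA_hA, List.append_assoc, hb, Nat.max_comm]
  | e5 a b h x y z =>
      have hb : max (a.val + 1) (b.val + 1) = b.val + 1 :=
        Nat.max_eq_right (by have := Fin.lt_iff_val_lt_val.mp h; omega)
      simp [wordOf, hA_append, hA_hA, List.append_assoc, hb, Nat.max_comm]
  | e6a c d h x y z =>
      have hb : max (d.val + 1) (c.val + 1) = d.val + 1 :=
        Nat.max_eq_left (by have := Fin.le_iff_val_le_val.mp h; omega)
      simp [wordOf, hA_append, hA_hA, List.append_assoc, hb]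
  | e6b c d h x y z =>
      have hb : max (d.val + 1) (c.val + 1) = d.val + 1 :=
        Nat.max_eq_left (by have := Fin.le_iff_val_le_val.mp h; omega)
      simp [wordOf, hA_append, hA_hA, List.append_assoc, hb]
  | e7a c d h x y z =>
      have hb : max (d.val + 1) (c.val + 1) = d.val + 1 :=
        Nat.max_eq_left (by have := Fin.le_iff_val_le_val.mp h; omega)
      simp [wordOf, hA_append, hA_hA, List.append_assoc, hb]
  | e7b c d h x y z =>
      have hb : max (d.val + 1) (c.val + 1) = d.val + 1 :=
        Nat.max_eq_left (by have := Fin.le_iff_val_le_val.mp h; omega)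
      simp [wordOf, hA_append, hA_hA, List.append_assoc, hb]

lemma word_cong {γ : ℕ} {s t : STree γ} (h : Cong γ s t) : wordOf s = wordOf t := by
  induction h with
  | here h => exact word_rootRel h
  | dashvL a r _ ih => simp [wordOf, ih]
  | dashvR a l _ ih => simp [wordOf, ih]
  | vdashL a r _ ih => simp [wordOf, ih]
  | vdashR a l _ ih => simp [wordOf, ih]

lemma word_eqv {γ : ℕ} {s t : STree γ} (h : Eqv γ s t) : wordOf s = wordOf t := by
  induction h with
  | rel x y h => exact word_cong h
  | refl x => rfl
  | symm x y _ ih => exact ih.symm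
  | trans x y z _ _ ih1 ih2 => exact ih1.trans ih2

def fv {γ : ℕ} (a : Fin γ) : ℕ := a.val + 1

lemma wordOf_rightComb {γ : ℕ} (u : List (Fin γ)) :
    wordOf (rightComb u) = u.map fv ++ [0] := by
  induction u with
  | nil => rfl
  | cons a u ih => simp [rightComb, wordOf, ih, hA, fv]

lemma wordOf_hook {γ : ℕ} (u v : List (Fin γ)) :
    wordOf (hook u v) = u.map fv ++ 0 :: v.map fv := by
  induction v using List.reverseRecOn with
  | nil => simp [hook_nil, wordOf_rightComb]
  | append_singleton v b ih =>
      rw [hook_concat]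
      simp [wordOf, ih, hA, fv]

lemma map_fv_max {γ : ℕ} (a : Fin γ) (u : List (Fin γ)) :
    (u.map (fun b => max a b)).map fv = hA (a.val + 1) (u.map fv) := by
  simp only [hA, List.map_map]
  congr 1
  funext b
  simp [Function.comp, fv, finValMax]

lemma eqvN0 {γ : ℕ} (a : Fin γ) : ∀ u' u v : List (Fin γ),
    Eqv γ (.dashv a (hook u v) (rightComb u'))
      (hook u (v ++ u'.map (fun x => max a x) ++ [a])) := by
  intro u'
  induction u' with
  | nil =>
      intro u v
      have hl : v ++ (List.map (fun x => max a x) ([] : List (Fin γ))) ++ [a] = v ++ [a] := by simp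
      rw [hl, hook_concat]
      exact eqvRefl _
  | cons b u'' ih =>
      intro u v
      rcases lt_or_ge a b with hab | hba
      · have s1 : Eqv γ (.dashv a (hook u v) (rightComb (b :: u'')))
            (.dashv a (.dashv b (hook u v) .leaf) (rightComb u'')) :=
          eqvSymm (eqvRel (RootRel.e2 a b hab (hook u v) .leaf (rightComb u'')))
        rw [← hook_concat] at s1
        have s2 := ih u (v ++ [b])
        have hl : v ++ (b :: u'').map (fun x => max a x) ++ [a]
            = (v ++ [b]) ++ u''.map (fun x => max a x) ++ [a] := by
          simp [max_eq_right hab.le]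
        rw [hl]
        exact eqvTrans s1 s2
      · have s1 : Eqv γ (.dashv a (hook u v) (rightComb (b :: u'')))
            (.dashv a (hook u v) (.dashv b .leaf (rightComb u''))) :=
          eqvSymm (eqvRel (RootRel.e6b b a hba (hook u v) .leaf (rightComb u'')))
        have s2 : Eqv γ (.dashv a (hook u v) (.dashv b .leaf (rightComb u'')))
            (.dashv a (.dashv a (hook u v) .leaf) (rightComb u'')) :=
          eqvSymm (eqvRel (RootRel.e6a b a hba (hook u v) .leaf (rightComb u'')))
        rw [← hook_concat] at s2
        have s3 := ih u (v ++ [a])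
        have hl : v ++ (b :: u'').map (fun x => max a x) ++ [a]
            = (v ++ [a]) ++ u''.map (fun x => max a x) ++ [a] := by
          simp [max_eq_left hba]
        rw [hl]
        exact eqvTrans s1 (eqvTrans s2 s3)

lemma eqvM00 {γ : ℕ} (a : Fin γ) : ∀ u u' : List (Fin γ),
    Eqv γ (.vdash a (rightComb u) (rightComb u'))
      (rightComb (u.map (fun x => max a x) ++ a :: u')) := by
  intro u
  induction u with
  | nil => intro u'; exact eqvRefl _
  | cons b u'' ih =>
      intro u'
      rcases le_or_gt b a with hba | hab
      · have s1 : Eqv γ (.vdash a (rightComb (b :: u'')) (rightComb u'))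
            (.vdash a .leaf (.vdash a (rightComb u'') (rightComb u'))) :=
          eqvRel (RootRel.e7b b a hba .leaf (rightComb u'') (rightComb u'))
        have s2 := eqvVdashR a .leaf (ih u')
        have hl : (b :: u'').map (fun x => max a x) ++ a :: u'
            = a :: (u''.map (fun x => max a x) ++ a :: u') := by
          simp [max_eq_left hba]
        rw [hl]
        exact eqvTrans s1 s2
      · have s1 : Eqv γ (.vdash a (rightComb (b :: u'')) (rightComb u'))
            (.vdash b .leaf (.vdash a (rightComb u'') (rightComb u'))) :=
          eqvRel (RootRel.e5 a b hab .leaf (rightComb u'') (rightComb u'))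
        have s2 := eqvVdashR b .leaf (ih u')
        have hl : (b :: u'').map (fun x => max a x) ++ a :: u'
            = b :: (u''.map (fun x => max a x) ++ a :: u') := by
          simp [max_eq_right hab.le]
        rw [hl]
        exact eqvTrans s1 s2

lemma eqvM0 {γ : ℕ} (a : Fin γ) : ∀ v u u' : List (Fin γ),
    Eqv γ (.vdash a (hook u v) (rightComb u'))
      (rightComb (u.map (fun x => max a x) ++ a :: v.map (fun x => max a x) ++ u')) := by
  intro v
  induction v using List.reverseRecOn with
  | nil => intro u u'; simpa [hook_nil] using eqvM00 a u u'
  | append_singleton w b ih =>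
      intro u u'
      rw [hook_concat]
      rcases le_or_gt b a with hba | hab
      · have s1 : Eqv γ (.vdash a (.dashv b (hook u w) .leaf) (rightComb u'))
            (.vdash a (.vdash b (hook u w) .leaf) (rightComb u')) :=
          eqvRel (RootRel.e7a b a hba (hook u w) .leaf (rightComb u'))
        have s2 : Eqv γ (.vdash a (.vdash b (hook u w) .leaf) (rightComb u'))
            (.vdash a (hook u w) (.vdash a .leaf (rightComb u'))) :=
          eqvRel (RootRel.e7b b a hba (hook u w) .leaf (rightComb u'))
        have s3 := ih u (a :: u')
        have hl : u.map (fun x => max a x) ++ a :: (w ++ [b]).map (fun x => max a x) ++ u'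
            = u.map (fun x => max a x) ++ a :: w.map (fun x => max a x) ++ a :: u' := by
          simp [max_eq_left hba]
        rw [hl]
        exact eqvTrans s1 (eqvTrans s2 s3)
      · have s1 : Eqv γ (.vdash a (.dashv b (hook u w) .leaf) (rightComb u'))
            (.vdash a (hook u w) (.vdash b .leaf (rightComb u'))) :=
          eqvRel (RootRel.e3 a b hab (hook u w) .leaf (rightComb u'))
        have s2 := ih u (b :: u')
        have hl : u.map (fun x => max a x) ++ a :: (w ++ [b]).map (fun x => max a x) ++ u'
            = u.map (fun x => max a x) ++ a :: w.map (fun x => max a x) ++ b :: u' := by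
          simp [max_eq_right hab.le]
        rw [hl]
        exact eqvTrans s1 s2

lemma eqvM {γ : ℕ} (a : Fin γ) : ∀ v' u v u' : List (Fin γ),
    Eqv γ (.vdash a (hook u v) (hook u' v'))
      (hook (u.map (fun x => max a x) ++ a :: v.map (fun x => max a x) ++ u') v') := by
  intro v'
  induction v' using List.reverseRecOn with
  | nil => intro u v u'; exact eqvM0 a v u u'
  | append_singleton w c ih =>
      intro u v u'
      rw [hook_concat u' w c, hook_concat _ w c]
      have s1 : Eqv γ (.vdash a (hook u v) (.dashv c (hook u' w) .leaf))
          (.dashv c (.vdash a (hook u v) (hook u' w)) .leaf) :=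
        eqvSymm (eqvRel (RootRel.e1 c a (hook u v) (hook u' w) .leaf))
      exact eqvTrans s1 (eqvDashvL c .leaf (ih u v u'))

lemma eqvN {γ : ℕ} (a : Fin γ) : ∀ v' u v u' : List (Fin γ),
    Eqv γ (.dashv a (hook u v) (hook u' v'))
      (hook u (v ++ u'.map (fun x => max a x) ++ a :: v'.map (fun x => max a x))) := by
  intro v'
  induction v' using List.reverseRecOn with
  | nil =>
      intro u v u'
      have hl : v ++ u'.map (fun x => max a x) ++ a :: (List.map (fun x => max a x) ([] : List (Fin γ)))
          = v ++ u'.map (fun x => max a x) ++ [a] := by simp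
      rw [hl]
      exact eqvN0 a u' u v
  | append_singleton w b ih =>
      intro u v u'
      rw [hook_concat u' w b]
      rcases lt_or_ge a b with hab | hba
      · have s1 : Eqv γ (.dashv a (hook u v) (.dashv b (hook u' w) .leaf))
            (.dashv b (.dashv a (hook u v) (hook u' w)) .leaf) :=
          eqvSymm (eqvRel (RootRel.e4 a b hab (hook u v) (hook u' w) .leaf))
        have s2 := eqvDashvL b .leaf (ih u v u')
        rw [← hook_concat] at s2
        have hl : v ++ u'.map (fun x => max a x) ++ a :: (w ++ [b]).map (fun x => max a x)
            = (v ++ u'.map (fun x => max a x) ++ a :: w.map (fun x => max a x)) ++ [b] := by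
          simp [max_eq_right hab.le]
        rw [hl]
        exact eqvTrans s1 s2
      · have s1 : Eqv γ (.dashv a (hook u v) (.dashv b (hook u' w) .leaf))
            (.dashv a (.dashv a (hook u v) (hook u' w)) .leaf) :=
          eqvSymm (eqvRel (RootRel.e6a b a hba (hook u v) (hook u' w) .leaf))
        have s2 := eqvDashvL a .leaf (ih u v u')
        rw [← hook_concat] at s2
        have hl : v ++ u'.map (fun x => max a x) ++ a :: (w ++ [b]).map (fun x => max a x)
            = (v ++ u'.map (fun x => max a x) ++ a :: w.map (fun x => max a x)) ++ [a] := by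
          simp [max_eq_left hba]
        rw [hl]
        exact eqvTrans s1 s2

lemma toHook {γ : ℕ} (t : STree γ) : ∃ u v : List (Fin γ), Eqv γ t (hook u v) := by
  induction t with
  | leaf => exact ⟨[], [], eqvRefl _⟩
  | dashv a l r ihl ihr =>
      obtain ⟨u1, v1, h1⟩ := ihl
      obtain ⟨u2, v2, h2⟩ := ihr
      exact ⟨u1, v1 ++ u2.map (fun x => max a x) ++ a :: v2.map (fun x => max a x),
        eqvTrans (eqvDashv a h1 h2) (eqvN a v2 u1 v1 u2)⟩
  | vdash a l r ihl ihr =>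
      obtain ⟨u1, v1, h1⟩ := ihl
      obtain ⟨u2, v2, h2⟩ := ihr
      exact ⟨u1.map (fun x => max a x) ++ a :: v1.map (fun x => max a x) ++ u2, v2,
        eqvTrans (eqvVdash a h1 h2) (eqvM a v2 u1 v1 u2)⟩

lemma fv_inj {γ : ℕ} : Function.Injective (fv (γ := γ)) := by
  intro a b h
  exact Fin.ext (by simpa [fv] using h)

lemma hookWordInj {γ : ℕ} : ∀ (u u' v v' : List (Fin γ)),
    u.map fv ++ 0 :: v.map fv = u'.map fv ++ 0 :: v'.map fv → u = u' ∧ v = v' := by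
  intro u
  induction u with
  | nil =>
      intro u' v v' h
      cases u' with
      | nil =>
          simp only [List.map_nil, List.nil_append, List.cons.injEq, true_and] at h
          exact ⟨rfl, List.map_injective_iff.mpr fv_inj h⟩
      | cons b u'' =>
          exfalso
          simp only [List.map_nil, List.nil_append, List.map_cons, List.cons_append,
            List.cons.injEq] at h
          exact Nat.succ_ne_zero b.val h.1.symm
  | cons a u'' ih =>
      intro u' v v' h
      cases u' with
      | nil =>
          exfalso
          simp only [List.map_nil, List.nil_append, List.map_cons, List.cons_append,
            List.cons.injEq] at h
          exact Nat.succ_ne_zero a.val h.1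
      | cons b u3 =>
          simp only [List.map_cons, List.cons_append, List.cons.injEq] at h
          obtain ⟨hab, ht⟩ := h
          obtain rfl : a = b := fv_inj hab
          obtain ⟨h1, h2⟩ := ih u3 v v' ht
          exact ⟨by rw [h1], h2⟩


/-- Two syntax trees with the same number of leaves have the same image under
`word_γ` if and only if they are equivalent modulo the relations of the
presentation of `Dias_γ`. -/
theorem stmt5 (γ : ℕ) (t₁ t₂ : STree γ) (h : nleaves t₁ = nleaves t₂) :
    wordOf t₁ = wordOf t₂ ↔ Relation.EqvGen (Cong γ) t₁ t₂ := by
  constructor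
  · intro hw
    obtain ⟨u1, v1, h1⟩ := toHook t₁
    obtain ⟨u2, v2, h2⟩ := toHook t₂
    have w1 : wordOf t₁ = wordOf (hook u1 v1) := word_eqv h1
    have w2 : wordOf t₂ = wordOf (hook u2 v2) := word_eqv h2
    rw [wordOf_hook] at w1 w2
    obtain ⟨rfl, rfl⟩ := hookWordInj u1 u2 v1 v2 (by rw [← w1, ← w2, hw])
    exact eqvTrans h1 (eqvSymm h2)
  · intro hE
    exact word_eqv hE
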